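/- Let (R, m) be a Noetherian local ring and let 0 → M₁ → M → M₂ → 0 be a short exact sequence of finitely generated R-modules of dimension at most one. Then c(M) ≤ c(M₁) + c(M₂). -/

import Mathlib

open IsLocalRing

/-- The length `ℓ_R(M)` of an `R`-module `M`, defined as the Krull dimension of its lattice of
submodules (the supremum of lengths of chains of submodules). -/
noncomputable def moduleLength (R M : Type) [CommRing R] [AddCommGroup M] [Module R M] : ℕ∞ :=
  WithBot.unbotD 0 (Order.krullDim (Submodule R M))

/-- `v(M) = ℓ_R(M / mM)`, the minimal number of generators of `M` (by Nakayama's lemma),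
where `m` is a given ideal of `R` (in applications, the maximal ideal of a local ring). -/
noncomputable def numGen (R : Type) [CommRing R] (m : Ideal R) (M : Type) [AddCommGroup M]
    [Module R M] : ℕ∞ :=
  moduleLength R (M ⧸ (m • (⊤ : Submodule R M)))

/-- `c(M) = sup { v(N) | N an R-submodule of M }`. -/
noncomputable def cInv (R : Type) [CommRing R] (m : Ideal R) (M : Type) [AddCommGroup M]
    [Module R M] : ℕ∞ :=
  ⨆ N : Submodule R M, numGen R m N

/-- The colon submodule `(N :_M I) = { x ∈ M | I • x ⊆ N }`. -/
def colonSub {R M : Type} [CommRing R] [AddCommGroup M] [Module R M] (N : Submodule R M)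
    (I : Ideal R) : Submodule R M where
  carrier := { x | ∀ r ∈ I, r • x ∈ N }
  add_mem' := by
    intro a b ha hb r hr
    simpa [smul_add] using N.add_mem (ha r hr) (hb r hr)
  zero_mem' := by
    intro r hr
    simp
  smul_mem' := by
    intro c x hx r hr
    rw [smul_comm]
    exact N.smul_mem c (hx r hr)

/-- `ℓ_R((N :_M m)/N)`, the length of the quotient of the colon submodule `(N :_M m)` by `N`. -/
noncomputable def colonQuotLen (R : Type) [CommRing R] (m : Ideal R) (M : Type) [AddCommGroup M]
    [Module R M] (N : Submodule R M) : ℕ∞ :=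
  moduleLength R (↥(colonSub N m) ⧸ Submodule.comap (colonSub N m).subtype N)

/-- `r(A) = sup { ℓ_R((B :_A m)/B) | B an R-submodule of A }`. -/
noncomputable def rInv (R : Type) [CommRing R] (m : Ideal R) (A : Type) [AddCommGroup A]
    [Module R A] : ℕ∞ :=
  ⨆ B : Submodule R A, colonQuotLen R m A B

/-- `dim_{R/m} Soc(N)` where `Soc(N) = (0 :_N m)`; since the socle is killed by `m`, this
dimension equals its length as an `R`-module. -/
noncomputable def socDim (R : Type) [CommRing R] (m : Ideal R) (N : Type) [AddCommGroup N]
    [Module R N] : ℕ∞ :=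
  moduleLength R (colonSub (⊥ : Submodule R N) m)

open Order
section AuxOrder
variable {α β γ : Type*} [PartialOrder α] [PartialOrder β] [PartialOrder γ]

lemma aux_len (F : α → β) (G : α → γ) (hF : Monotone F) (hG : Monotone G)
    (hinj : ∀ a b : α, a ≤ b → F b ≤ F a → G b ≤ G a → b ≤ a) :
    ∀ p : LTSeries α, (p.length : ℕ∞) ≤ Order.height (F p.last) + Order.height (G p.last) := by
  suffices H : ∀ (n : ℕ) (p : LTSeries α), p.length = n →
      (p.length : ℕ∞) ≤ Order.height (F p.last) + Order.height (G p.last) by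
    exact fun p => H p.length p rfl
  intro n
  induction n with
  | zero => intro p _; simp_all
  | succ n ih =>
    intro p hn
    have hne : p.length ≠ 0 := by omega
    have hrel := p.eraseLast_last_rel_last hne
    have hlen : p.eraseLast.length = n := by
      rw [RelSeries.eraseLast_length]; omega
    have H := ih p.eraseLast hlen
    have hor : F p.eraseLast.last < F p.last ∨ G p.eraseLast.last < G p.last := by
      by_contra hc
      push_neg at hc
      have h1 : F p.last ≤ F p.eraseLast.last :=
        ((hF hrel.le).lt_or_eq.resolve_left hc.1).ge
      have h2 : G p.last ≤ G p.eraseLast.last :=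
        ((hG hrel.le).lt_or_eq.resolve_left hc.2).ge
      exact absurd (hinj _ _ hrel.le h1 h2) (not_le_of_gt hrel)
    have key : Order.height (F p.eraseLast.last) + Order.height (G p.eraseLast.last) + 1 ≤
        Order.height (F p.last) + Order.height (G p.last) := by
      rcases hor with h | h
      · have : Order.height (F p.eraseLast.last) + 1 ≤ Order.height (F p.last) := by
          rw [height_eq_iSup_lt_height (F p.last)]
          exact le_iSup₂_of_le (F p.eraseLast.last) h le_rfl
        calc Order.height (F p.eraseLast.last) + Order.height (G p.eraseLast.last) + 1
            = (Order.height (F p.eraseLast.last) + 1) + Order.height (G p.eraseLast.last) := by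
              ring
          _ ≤ Order.height (F p.last) + Order.height (G p.last) :=
              add_le_add this (height_mono (hG hrel.le))
      · have : Order.height (G p.eraseLast.last) + 1 ≤ Order.height (G p.last) := by
          rw [height_eq_iSup_lt_height (G p.last)]
          exact le_iSup₂_of_le (G p.eraseLast.last) h le_rfl
        calc Order.height (F p.eraseLast.last) + Order.height (G p.eraseLast.last) + 1
            = Order.height (F p.eraseLast.last) + (Order.height (G p.eraseLast.last) + 1) := by
              ring
          _ ≤ Order.height (F p.last) + Order.height (G p.last) :=
              add_le_add (height_mono (hF hrel.le)) this
    rw [hn]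
    calc ((n + 1 : ℕ) : ℕ∞) = (n : ℕ∞) + 1 := by push_cast; ring
      _ ≤ Order.height (F p.eraseLast.last) + Order.height (G p.eraseLast.last) + 1 := by
          exact add_le_add (by rw [← hlen]; exact H) le_rfl
      _ ≤ _ := key

end AuxOrder

section ML
variable (R : Type) [CommRing R]

lemma moduleLength_eq_iSup (M : Type) [AddCommGroup M] [Module R M] :
    moduleLength R M = ⨆ p : LTSeries (Submodule R M), (p.length : ℕ∞) := by
  rw [moduleLength, Order.krullDim_eq_iSup_length, WithBot.unbotD_coe]

lemma height_le_moduleLength (M : Type) [AddCommGroup M] [Module R M] (x : Submodule R M) :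
    Order.height x ≤ moduleLength R M := by
  rw [moduleLength, Order.krullDim_eq_iSup_height_of_nonempty, WithBot.unbotD_coe]
  exact le_iSup _ x

lemma moduleLength_le_of_strictMono (M N : Type) [AddCommGroup M] [Module R M]
    [AddCommGroup N] [Module R N] (f : Submodule R M → Submodule R N) (hf : StrictMono f) :
    moduleLength R M ≤ moduleLength R N := by
  rw [moduleLength_eq_iSup, moduleLength_eq_iSup]
  exact iSup_le fun p => le_iSup_of_le (p.map f hf) (by simp)

lemma moduleLength_le_of_surjective (M N : Type) [AddCommGroup M] [Module R M]
    [AddCommGroup N] [Module R N] (σ : M →ₗ[R] N) (hσ : Function.Surjective σ) :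
    moduleLength R N ≤ moduleLength R M := by
  have hmono : Monotone (Submodule.comap σ : Submodule R N → Submodule R M) :=
    fun _ _ h => Submodule.comap_mono h
  exact moduleLength_le_of_strictMono R N M _
    (hmono.strictMono_of_injective (Submodule.comap_injective_of_surjective hσ))

lemma moduleLength_eq_of_equiv (M N : Type) [AddCommGroup M] [Module R M]
    [AddCommGroup N] [Module R N] (e : M ≃ₗ[R] N) :
    moduleLength R M = moduleLength R N :=
  le_antisymm (moduleLength_le_of_surjective R N M e.symm.toLinearMap e.symm.surjective)
    (moduleLength_le_of_surjective R M N e.toLinearMap e.surjective)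

set_option maxHeartbeats 1000000 in
lemma moduleLength_le_add (P : Type) [AddCommGroup P] [Module R P] (K : Submodule R P) :
    moduleLength R P ≤ moduleLength R K + moduleLength R (P ⧸ K) := by
  rw [moduleLength_eq_iSup]
  refine iSup_le fun p => ?_
  have hinj : ∀ a b : Submodule R P, a ≤ b → b.comap K.subtype ≤ a.comap K.subtype →
      b.map K.mkQ ≤ a.map K.mkQ → b ≤ a := by
    intro a b hab h1 h2 x hxb
    obtain ⟨y, hya, hyx⟩ := h2 ⟨x, hxb, rfl⟩
    have hk : x - y ∈ K := by
      have := (Submodule.Quotient.eq K).mp hyx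
      simpa using K.neg_mem this
    have hxyb : x - y ∈ b := b.sub_mem hxb (hab hya)
    have hxya : x - y ∈ a := h1 (show (⟨x - y, hk⟩ : K) ∈ b.comap K.subtype from hxyb)
    simpa using a.add_mem hxya hya
  have h1 := aux_len (fun q : Submodule R P => q.comap K.subtype)
    (fun q : Submodule R P => q.map K.mkQ)
    (fun _ _ h => Submodule.comap_mono h) (fun _ _ h => Submodule.map_mono h) hinj p
  exact h1.trans (add_le_add (height_le_moduleLength R _ _) (height_le_moduleLength R _ _))

end ML

lemma numGen_le_aux (R : Type) [CommRing R] (m : Ideal R)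
    (M₁ M M₂ : Type) [AddCommGroup M₁] [Module R M₁] [AddCommGroup M] [Module R M]
    [AddCommGroup M₂] [Module R M₂]
    (f : M₁ →ₗ[R] M) (g : M →ₗ[R] M₂) (hfg : Function.Exact f g)
    (N : Submodule R M) :
    numGen R m ↥N ≤ numGen R m ↥(N.comap f) + numGen R m ↥(N.map g) := by
  classical
  set A : Submodule R M₁ := N.comap f with hA
  set B : Submodule R M₂ := N.map g with hB
  let g' : ↥N →ₗ[R] M₂ := g ∘ₗ N.subtype
  have hmemB : ∀ x : ↥N, g' x ∈ B := fun x => ⟨x.1, x.2, rfl⟩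
  let g'' : ↥N →ₗ[R] ↥B := LinearMap.codRestrict B g' hmemB
  have hg''surj : Function.Surjective g'' := by
    rintro ⟨y, x, hx, rfl⟩
    exact ⟨⟨x, hx⟩, rfl⟩
  let ψ : ↥N →ₗ[R] (↥B ⧸ (m • ⊤ : Submodule R ↥B)) := (Submodule.mkQ _) ∘ₗ g''
  have hkerψ : LinearMap.ker ψ = (m • ⊤ : Submodule R ↥N) ⊔ LinearMap.ker g'' := by
    show LinearMap.ker ((Submodule.mkQ _) ∘ₗ g'') = _
    rw [LinearMap.ker_comp, Submodule.ker_mkQ]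
    have h1 : (m • ⊤ : Submodule R ↥B) = Submodule.map g'' (m • ⊤ : Submodule R ↥N) := by
      rw [Submodule.map_smul'', Submodule.map_top, LinearMap.range_eq_top.mpr hg''surj]
    rw [h1, Submodule.comap_map_eq, sup_comm]
  let φ : (↥N ⧸ (m • ⊤ : Submodule R ↥N)) →ₗ[R] (↥B ⧸ (m • ⊤ : Submodule R ↥B)) :=
    Submodule.liftQ _ ψ (by rw [hkerψ]; exact le_sup_left)
  have hφ : Function.Surjective φ := by
    rw [← LinearMap.range_eq_top, Submodule.range_liftQ, LinearMap.range_eq_top]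
    exact (Submodule.mkQ_surjective _).comp hg''surj
  have hK : LinearMap.ker φ
      = Submodule.map (m • ⊤ : Submodule R ↥N).mkQ (LinearMap.ker g'') := by
    show LinearMap.ker (Submodule.liftQ _ ψ _) = _
    rw [Submodule.ker_liftQ, hkerψ, Submodule.map_sup, Submodule.mkQ_map_self, bot_sup_eq]
  let α : ↥A →ₗ[R] ↥N := LinearMap.codRestrict N (f ∘ₗ A.subtype) (fun a => a.2)
  have hrangeα : LinearMap.range α = LinearMap.ker g'' := by
    ext x
    simp only [LinearMap.mem_range, LinearMap.mem_ker]
    constructor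
    · rintro ⟨a, rfl⟩
      exact Subtype.ext (hfg.apply_apply_eq_zero a.1)
    · intro hx
      have hx' : g x.1 = 0 := congrArg Subtype.val hx
      obtain ⟨a, ha⟩ := (hfg x.1).mp hx'
      exact ⟨⟨a, show f a ∈ N by rw [ha]; exact x.2⟩, Subtype.ext ha⟩
  have hle : (m • ⊤ : Submodule R ↥A)
      ≤ LinearMap.ker ((Submodule.mkQ (m • ⊤ : Submodule R ↥N)) ∘ₗ α) := by
    rw [LinearMap.ker_comp, Submodule.ker_mkQ, ← Submodule.map_le_iff_le_comap,
      Submodule.map_smul'']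
    exact Submodule.smul_mono le_rfl le_top
  let θ : (↥A ⧸ (m • ⊤ : Submodule R ↥A)) →ₗ[R] (↥N ⧸ (m • ⊤ : Submodule R ↥N)) :=
    Submodule.liftQ _ _ hle
  have hrangeθ : LinearMap.range θ = LinearMap.ker φ := by
    show LinearMap.range (Submodule.liftQ _ _ hle) = _
    rw [Submodule.range_liftQ, LinearMap.range_comp, hrangeα, hK]
  have step1 : moduleLength R (↥N ⧸ (m • ⊤ : Submodule R ↥N))
      ≤ moduleLength R (LinearMap.ker φ)
        + moduleLength R ((↥N ⧸ (m • ⊤ : Submodule R ↥N)) ⧸ LinearMap.ker φ) :=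
    moduleLength_le_add R _ _
  have step2 : moduleLength R (LinearMap.ker φ)
      ≤ moduleLength R (↥A ⧸ (m • ⊤ : Submodule R ↥A)) := by
    have h := moduleLength_le_of_surjective R _ _ θ.rangeRestrict
      (LinearMap.surjective_rangeRestrict θ)
    rw [hrangeθ] at h
    exact h
  have step3 : moduleLength R ((↥N ⧸ (m • ⊤ : Submodule R ↥N)) ⧸ LinearMap.ker φ)
      = moduleLength R (↥B ⧸ (m • ⊤ : Submodule R ↥B)) :=
    moduleLength_eq_of_equiv R _ _ (φ.quotKerEquivOfSurjective hφ)
  show moduleLength R (↥N ⧸ (m • ⊤ : Submodule R ↥N)) ≤ _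
  exact step1.trans (by rw [step3]; exact add_le_add step2 le_rfl)

/-- For a short exact sequence `0 → M₁ → M → M₂ → 0` of finitely generated modules of dimension
at most one over a Noetherian local ring `(R, m)`, one has `c(M) ≤ c(M₁) + c(M₂)`. -/
theorem stmt_4 (R : Type) [CommRing R] [IsNoetherianRing R] [IsLocalRing R]
    (M₁ M M₂ : Type) [AddCommGroup M₁] [Module R M₁] [AddCommGroup M] [Module R M]
    [AddCommGroup M₂] [Module R M₂]
    [Module.Finite R M₁] [Module.Finite R M] [Module.Finite R M₂]
    (h₁ : ringKrullDim (R ⧸ Module.annihilator R M₁) ≤ 1)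
    (h : ringKrullDim (R ⧸ Module.annihilator R M) ≤ 1)
    (h₂ : ringKrullDim (R ⧸ Module.annihilator R M₂) ≤ 1)
    (f : M₁ →ₗ[R] M) (g : M →ₗ[R] M₂)
    (hf : Function.Injective f) (hg : Function.Surjective g) (hfg : Function.Exact f g) :
    cInv R (maximalIdeal R) M ≤ cInv R (maximalIdeal R) M₁ + cInv R (maximalIdeal R) M₂ := by
  have key : ∀ N : Submodule R M, numGen R (maximalIdeal R) ↥N
      ≤ cInv R (maximalIdeal R) M₁ + cInv R (maximalIdeal R) M₂ := by
    intro N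
    refine (numGen_le_aux R _ M₁ M M₂ f g hfg N).trans (add_le_add ?_ ?_)
    · exact le_iSup (fun K : Submodule R M₁ => numGen R (maximalIdeal R) ↥K) (N.comap f)
    · exact le_iSup (fun K : Submodule R M₂ => numGen R (maximalIdeal R) ↥K) (N.map g)
  exact iSup_le key
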